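/- arXiv:2506.18283 — 2 statements merged into one kernel-verified Lean document; each statement's English description precedes it below -/
import Mathlib

section
/- Let p be a probability distribution on a finite alphabet of size k and let q be a type with denominator m (i.e., m·q(i) ∈ ℕ for all i) whose support is contained in the support of p. Then the probability under the i.i.d. product measure p^m that a sample of length m has empirical distribution exactly q is at least (m+1)^{−k} · exp(−m·KL(q‖p)), where KL(q‖p) = Σ_i q(i)·log(q(i)/p(i)). -/
open Finset
open scoped Classical


lemma fact_pow_le (a b : ℕ) : a.factorial * a ^ b ≤ b.factorial * a ^ a := by
  rcases le_or_gt b a with h | h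
  · have h1 : a.factorial = b.factorial * a.descFactorial (a - b) := by
      have := Nat.factorial_mul_descFactorial (Nat.sub_le a b)
      rw [Nat.sub_sub_self h] at this
      omega
    calc a.factorial * a ^ b = b.factorial * a.descFactorial (a-b) * a ^ b := by rw [h1]
      _ ≤ b.factorial * a ^ (a-b) * a ^ b := by
          have := Nat.descFactorial_le_pow a (a - b)
          exact Nat.mul_le_mul_right _ (Nat.mul_le_mul_left _ this)
      _ = b.factorial * a ^ a := by rw [mul_assoc, ← pow_add]; congr 2; omega
  · have h1 : b.factorial = a.factorial * b.descFactorial (b - a) := by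
      have := Nat.factorial_mul_descFactorial (Nat.sub_le b a)
      rw [Nat.sub_sub_self (le_of_lt h)] at this
      omega
    have h2 : a ^ (b - a) ≤ b.descFactorial (b - a) := by
      calc a ^ (b-a) ≤ (a+1) ^ (b-a) := Nat.pow_le_pow_left (by omega) _
        _ = (b + 1 - (b-a)) ^ (b-a) := by congr 1; omega
        _ ≤ b.descFactorial (b-a) := Nat.pow_sub_le_descFactorial b (b-a)
    calc a.factorial * a ^ b = a.factorial * (a ^ (b-a) * a ^ a) := by
          rw [← pow_add]; congr 2; omega
      _ ≤ a.factorial * (b.descFactorial (b-a) * a ^ a) := by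
          exact Nat.mul_le_mul_left _ (Nat.mul_le_mul_right _ h2)
      _ = b.factorial * a ^ a := by rw [h1]; ring


lemma card_type_class : ∀ (m : ℕ) {k : ℕ} (n : Fin k → ℕ), (∑ i, n i) = m →
    ((univ.filter (fun z : Fin m → Fin k => ∀ i,
      (univ.filter (fun j => z j = i)).card = n i)).card) * ∏ i, (n i).factorial
      = m.factorial := by
  intro m
  induction m with
  | zero =>
    intro k n hn
    have hn0 : ∀ i, n i = 0 := by
      intro i
      have := Finset.sum_eq_zero_iff_of_nonneg (fun i _ => Nat.zero_le _) |>.mp hn i (mem_univ i)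
      exact this
    have : (univ.filter (fun z : Fin 0 → Fin k => ∀ i,
        (univ.filter (fun j => z j = i)).card = n i)) = univ := by
      apply Finset.filter_true_of_mem
      intro z _ i
      simp [hn0 i]
    rw [this]
    simp [hn0, Nat.factorial]
  | succ m ih =>
    intro k n hn
    have hcnt : ∀ (i0 : Fin k) (t : Fin m → Fin k) (i : Fin k),
        (univ.filter (fun j : Fin (m+1) => (Fin.cons i0 t : Fin (m+1) → Fin k) j = i)).card
          = (if i0 = i then 1 else 0) + (univ.filter (fun j : Fin m => t j = i)).card := by
      intro i0 t i
      rw [Finset.card_filter, Fin.sum_univ_succ, Finset.card_filter]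
      simp
    have key : ((univ.filter (fun z : Fin (m+1) → Fin k => ∀ i,
        (univ.filter (fun j => z j = i)).card = n i)).card)
      = ∑ i0 : Fin k, if n i0 = 0 then 0 else
          ((univ.filter (fun t : Fin m → Fin k => ∀ i,
            (univ.filter (fun j => t j = i)).card
              = Function.update n i0 (n i0 - 1) i)).card) := by
      rw [Finset.card_filter]
      rw [← Equiv.sum_comp (Fin.consEquiv (fun _ : Fin (m+1) => Fin k))
        (fun z : Fin (m+1) → Fin k => if (∀ i, (univ.filter (fun j => z j = i)).card = n i) then 1 else 0)]
      rw [Fintype.sum_prod_type]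
      refine Finset.sum_congr rfl (fun i0 _ => ?_)
      by_cases h0 : n i0 = 0
      · rw [if_pos h0]
        refine Finset.sum_eq_zero (fun t _ => ?_)
        rw [if_neg]
        intro hP
        have := hP i0
        rw [show (Fin.consEquiv (fun _ : Fin (m+1) => Fin k)) (i0, t) = (Fin.cons i0 t : Fin (m+1) → Fin k) from rfl,
          hcnt i0 t i0, if_pos rfl] at this
        omega
      · rw [if_neg h0, Finset.card_filter]
        refine Finset.sum_congr rfl (fun t _ => ?_)
        congr 1
        rw [eq_iff_iff]
        constructor
        · intro hP i
          have := hP i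
          rw [show (Fin.consEquiv (fun _ : Fin (m+1) => Fin k)) (i0, t) = (Fin.cons i0 t : Fin (m+1) → Fin k) from rfl,
            hcnt i0 t i] at this
          by_cases hi : i = i0
          · subst hi; rw [Function.update_self]; rw [if_pos rfl] at this; omega
          · rw [Function.update_of_ne hi]; rw [if_neg (Ne.symm hi)] at this; omega
        · intro hP i
          have := hP i
          rw [show (Fin.consEquiv (fun _ : Fin (m+1) => Fin k)) (i0, t) = (Fin.cons i0 t : Fin (m+1) → Fin k) from rfl,
            hcnt i0 t i]
          by_cases hi : i = i0
          · subst hi; rw [Function.update_self] at this; rw [if_pos rfl]; omega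
          · rw [Function.update_of_ne hi] at this; rw [if_neg (Ne.symm hi)]; omega
    rw [key, Finset.sum_mul]
    have hterm : ∀ i0 : Fin k,
        (if n i0 = 0 then 0 else
          ((univ.filter (fun t : Fin m → Fin k => ∀ i,
            (univ.filter (fun j => t j = i)).card
              = Function.update n i0 (n i0 - 1) i)).card)) * ∏ i, (n i).factorial
        = m.factorial * n i0 := by
      intro i0
      by_cases h0 : n i0 = 0
      · rw [if_pos h0, h0]; simp
      · rw [if_neg h0]
        have hupd : ∑ i, Function.update n i0 (n i0 - 1) i = m := by
          rw [Finset.sum_update_of_mem (mem_univ i0), Finset.sdiff_singleton_eq_erase]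
          rw [← Finset.add_sum_erase univ n (mem_univ i0)] at hn
          have h0' : 1 ≤ n i0 := Nat.one_le_iff_ne_zero.mpr h0
          set S := ∑ x ∈ univ.erase i0, n x with hS
          clear_value S
          clear key hcnt ih hS
          omega
        have hprod : ∏ i, (n i).factorial
            = (∏ i, (Function.update n i0 (n i0 - 1) i).factorial) * n i0 := by
          have h1 : ∏ i, (Function.update n i0 (n i0 - 1) i).factorial
              = (n i0 - 1).factorial * ∏ i ∈ univ.erase i0, (n i).factorial := by
            rw [← Finset.mul_prod_erase univ
              (fun i => (Function.update n i0 (n i0 - 1) i).factorial) (mem_univ i0)]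
            rw [Function.update_self]
            congr 1
            refine Finset.prod_congr rfl (fun i hi => ?_)
            rw [Function.update_of_ne (Finset.ne_of_mem_erase hi)]
          rw [h1, ← Finset.mul_prod_erase univ (fun i => (n i).factorial) (mem_univ i0)]
          have h2 : (n i0).factorial = (n i0 - 1).factorial * n i0 := by
            obtain ⟨v, hv⟩ := Nat.exists_eq_succ_of_ne_zero h0
            rw [hv, Nat.succ_sub_one, Nat.factorial_succ, Nat.succ_eq_add_one]; ring
          rw [h2]; ring
        rw [hprod, ← mul_assoc, ih _ hupd]
    rw [Finset.sum_congr rfl (fun i0 _ => hterm i0), ← Finset.mul_sum, hn,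
      Nat.factorial_succ]
    ring

/-- Method-of-types lower bound: the probability, under the i.i.d. product of `p`,
that a sample of length `m` has empirical distribution exactly the type `q`, is at
least `(m+1)^(-k) · exp(-m · KL(q‖p))`. -/
theorem type_class_probability_lower_bound (k m : ℕ) (hm : 0 < m)
    (p q : Fin k → ℝ)
    (hp : ∀ i, 0 ≤ p i) (hpsum : ∑ i, p i = 1)
    (hq : ∀ i, 0 ≤ q i) (hqsum : ∑ i, q i = 1)
    (htype : ∀ i, ∃ c : ℕ, (m : ℝ) * q i = c)
    (hsupp : ∀ i, q i ≠ 0 → p i ≠ 0) :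
    ((m + 1 : ℝ) ^ k)⁻¹ * Real.exp (-(m : ℝ) * ∑ i, q i * Real.log (q i / p i)) ≤
      ∑ z ∈ Finset.univ.filter
          (fun z : Fin m → Fin k =>
            ∀ i, ((Finset.univ.filter (fun j => z j = i)).card : ℝ) / m = q i),
        ∏ j, p (z j) := by
  choose N hN using htype
  have hm0 : (0:ℝ) < m := by exact_mod_cast hm
  have hqN : ∀ i, q i = (N i : ℝ) / m := by
    intro i; rw [← hN i]; field_simp
  have hNsum : ∑ i, N i = m := by
    have h1 : ((∑ i, N i : ℕ) : ℝ) = (m : ℝ) := by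
      push_cast
      rw [Finset.sum_congr rfl (fun i _ => (hN i).symm), ← Finset.mul_sum, hqsum, mul_one]
    exact_mod_cast h1
  -- replace the real-valued filter condition by the ℕ-valued one
  have hset : (univ.filter (fun z : Fin m → Fin k =>
        ∀ i, ((univ.filter (fun j => z j = i)).card : ℝ) / m = q i))
      = univ.filter (fun z : Fin m → Fin k =>
        ∀ i, (univ.filter (fun j => z j = i)).card = N i) := by
    refine Finset.filter_congr (fun z _ => ?_)
    constructor
    · intro h i
      have h2 := h i
      rw [hqN i, div_eq_div_iff hm0.ne' hm0.ne'] at h2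
      exact_mod_cast mul_right_cancel₀ (ne_of_gt hm0) h2
    · intro h i
      rw [h i, hqN i]
  have hcntsum : ∀ z : Fin m → Fin k,
      ∑ i, (univ.filter (fun j => z j = i)).card = m := by
    intro z
    have h1 := Finset.card_eq_sum_card_fiberwise
      (f := z) (s := (univ : Finset (Fin m))) (t := univ) (fun x _ => mem_univ (z x))
    simpa using h1.symm
  have hprodfib : ∀ (f : Fin k → ℝ) (z : Fin m → Fin k),
      ∏ j, f (z j) = ∏ i, f i ^ (univ.filter (fun j => z j = i)).card := by
    intro f z
    rw [Finset.prod_comp]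
    refine Finset.prod_subset (subset_univ _) ?_
    intro i _ hi
    have he : (univ.filter (fun j => z j = i)) = ∅ := by
      rw [Finset.filter_eq_empty_iff]
      intro j _ hji
      exact hi (Finset.mem_image.mpr ⟨j, mem_univ j, hji⟩)
    rw [he]; simp
  have hTsum : ∀ (f : Fin k → ℝ) (n : Fin k → ℕ),
      ∑ z ∈ univ.filter (fun z : Fin m → Fin k =>
          ∀ i, (univ.filter (fun j => z j = i)).card = n i), ∏ j, f (z j)
        = ((univ.filter (fun z : Fin m → Fin k =>
            ∀ i, (univ.filter (fun j => z j = i)).card = n i)).card : ℝ) * ∏ i, f i ^ n i := by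
    intro f n
    have h1 : ∀ z ∈ univ.filter (fun z : Fin m → Fin k =>
        ∀ i, (univ.filter (fun j => z j = i)).card = n i),
        ∏ j, f (z j) = ∏ i, f i ^ n i := by
      intro z hz
      rw [hprodfib f z]
      exact Finset.prod_congr rfl (fun i _ => by rw [(Finset.mem_filter.mp hz).2 i])
    rw [Finset.sum_congr rfl h1, Finset.sum_const, nsmul_eq_mul]
  -- Step C : nat comparison
  have hC : ∀ n : Fin k → ℕ, (∑ i, n i = m) →
      (univ.filter (fun z : Fin m → Fin k =>
        ∀ i, (univ.filter (fun j => z j = i)).card = n i)).card * ∏ i, (N i) ^ (n i)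
      ≤ (univ.filter (fun z : Fin m → Fin k =>
        ∀ i, (univ.filter (fun j => z j = i)).card = N i)).card * ∏ i, (N i) ^ (N i) := by
    intro n hn
    have hpos : 0 < (∏ i, (n i).factorial) * ∏ i, (N i).factorial := by positivity
    refine Nat.le_of_mul_le_mul_right ?_ hpos
    have e1 : (univ.filter (fun z : Fin m → Fin k =>
          ∀ i, (univ.filter (fun j => z j = i)).card = n i)).card * (∏ i, N i ^ n i)
          * ((∏ i, (n i).factorial) * ∏ i, (N i).factorial)
        = ((univ.filter (fun z : Fin m → Fin k =>
            ∀ i, (univ.filter (fun j => z j = i)).card = n i)).card * ∏ i, (n i).factorial)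
          * ∏ i, ((N i).factorial * N i ^ n i) := by
      rw [Finset.prod_mul_distrib]; ring
    have e2 : (univ.filter (fun z : Fin m → Fin k =>
          ∀ i, (univ.filter (fun j => z j = i)).card = N i)).card * (∏ i, N i ^ N i)
          * ((∏ i, (n i).factorial) * ∏ i, (N i).factorial)
        = ((univ.filter (fun z : Fin m → Fin k =>
            ∀ i, (univ.filter (fun j => z j = i)).card = N i)).card * ∏ i, (N i).factorial)
          * ∏ i, ((n i).factorial * N i ^ N i) := by
      rw [Finset.prod_mul_distrib]; ring
    rw [e1, e2, card_type_class m n hn, card_type_class m N hNsum]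
    exact Nat.mul_le_mul_left _
      (Finset.prod_le_prod' (fun i _ => fact_pow_le (N i) (n i)))
  -- rewrite q-powers
  have hq_pow : ∀ n : Fin k → ℕ, (∑ i, n i = m) →
      ∏ i, q i ^ n i = (∏ i, (N i : ℝ) ^ n i) / (m : ℝ) ^ m := by
    intro n hn
    rw [Finset.prod_congr rfl (fun i _ => by rw [hqN i, div_pow]), Finset.prod_div_distrib]
    congr 1
    rw [Finset.prod_pow_eq_pow_sum, hn]
  set B : ℝ := ((univ.filter (fun z : Fin m → Fin k =>
      ∀ i, (univ.filter (fun j => z j = i)).card = N i)).card : ℝ) * ∏ i, q i ^ N i with hB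
  -- fiberwise bound
  have hcle : ∀ z : Fin m → Fin k, ∀ i, (univ.filter (fun j => z j = i)).card < m + 1 :=
    fun z i => Nat.lt_succ_of_le (le_trans (Finset.card_filter_le _ _) (by simp))
  set φ : (Fin m → Fin k) → (Fin k → Fin (m+1)) :=
    fun z i => ⟨(univ.filter (fun j => z j = i)).card, hcle z i⟩ with hφ
  have hfiber : ∀ c : Fin k → Fin (m+1),
      ∑ z ∈ univ.filter (fun z : Fin m → Fin k => φ z = c), ∏ j, q (z j) ≤ B := by
    intro c
    have hfeq : (univ.filter (fun z : Fin m → Fin k => φ z = c))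
        = univ.filter (fun z : Fin m → Fin k =>
            ∀ i, (univ.filter (fun j => z j = i)).card = (c i : ℕ)) := by
      refine Finset.filter_congr (fun z _ => ?_)
      rw [funext_iff]
      constructor
      · intro h i; have := h i; rw [hφ] at this
        exact congrArg Fin.val this
      · intro h i; rw [hφ]; exact Fin.ext (h i)
    rw [hfeq]
    by_cases hsc : ∑ i, (c i : ℕ) = m
    · rw [hTsum q (fun i => (c i : ℕ)), hq_pow _ hsc, hB, hq_pow N hNsum]
      rw [mul_div_assoc', mul_div_assoc']
      apply div_le_div_of_nonneg_right ?_ (by positivity)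
      · exact_mod_cast hC (fun i => (c i : ℕ)) hsc
    · have : (univ.filter (fun z : Fin m → Fin k =>
          ∀ i, (univ.filter (fun j => z j = i)).card = (c i : ℕ))) = ∅ := by
        rw [Finset.filter_eq_empty_iff]
        intro z _ hzc
        exact hsc ((Finset.sum_congr rfl (fun i _ => (hzc i).symm)).trans (hcntsum z))
      rw [this, Finset.sum_empty, hB]
      exact mul_nonneg (Nat.cast_nonneg _)
        (Finset.prod_nonneg (fun i _ => pow_nonneg (hq i) _))
  have htotal : ∑ c : Fin k → Fin (m+1),
      ∑ z ∈ univ.filter (fun z : Fin m → Fin k => φ z = c), ∏ j, q (z j) = 1 := by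
    rw [Finset.sum_fiberwise univ φ (fun z => ∏ j, q (z j))]
    have h2 := Finset.sum_prod_piFinset (univ : Finset (Fin k))
      (fun (_ : Fin m) (i : Fin k) => q i)
    rw [Fintype.piFinset_univ] at h2
    rw [h2, hqsum]
    simp
  have hBlow : ((m + 1 : ℝ) ^ k)⁻¹ ≤ B := by
    have hpow : (0:ℝ) < (m + 1 : ℝ) ^ k := by positivity
    rw [inv_eq_one_div, div_le_iff₀ hpow]
    calc (1:ℝ) = ∑ c : Fin k → Fin (m+1),
          ∑ z ∈ univ.filter (fun z : Fin m → Fin k => φ z = c), ∏ j, q (z j) := htotal.symm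
      _ ≤ ∑ _c : Fin k → Fin (m+1), B := Finset.sum_le_sum (fun c _ => hfiber c)
      _ = (Fintype.card (Fin k → Fin (m+1)) : ℝ) * B := by
          rw [Finset.sum_const, Finset.card_univ, nsmul_eq_mul]
      _ = B * (m + 1 : ℝ) ^ k := by
          rw [Fintype.card_fun, Fintype.card_fin, Fintype.card_fin]
          push_cast; ring
  -- step B : product over p in terms of q and exp
  have hB2 : ∀ i, p i ^ N i
      = Real.exp (-((m:ℝ) * (q i * Real.log (q i / p i)))) * q i ^ N i := by
    intro i
    by_cases h0 : q i = 0
    · have hNi : N i = 0 := by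
        have h3 := hN i; rw [h0, mul_zero] at h3; exact_mod_cast h3.symm
      rw [hNi, h0]; simp
    · have hq0 : 0 < q i := lt_of_le_of_ne (hq i) (Ne.symm h0)
      have hp0 : 0 < p i := lt_of_le_of_ne (hp i) (Ne.symm (hsupp i h0))
      have e1 : p i ^ N i = Real.exp ((N i : ℝ) * Real.log (p i)) := by
        rw [Real.exp_nat_mul, Real.exp_log hp0]
      have e2 : q i ^ N i = Real.exp ((N i : ℝ) * Real.log (q i)) := by
        rw [Real.exp_nat_mul, Real.exp_log hq0]
      rw [e1, e2, ← Real.exp_add]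
      congr 1
      rw [Real.log_div h0 (hsupp i h0), ← hN i]
      ring
  have hBstep : ∏ i, p i ^ N i
      = Real.exp (-(m:ℝ) * ∑ i, q i * Real.log (q i / p i)) * ∏ i, q i ^ N i := by
    rw [Finset.prod_congr rfl (fun i _ => hB2 i), Finset.prod_mul_distrib, ← Real.exp_sum]
    congr 2
    rw [neg_mul, Finset.mul_sum]
    exact Finset.sum_neg_distrib _
  rw [hset, hTsum p N, hBstep]
  calc ((m + 1 : ℝ) ^ k)⁻¹ * Real.exp (-(m:ℝ) * ∑ i, q i * Real.log (q i / p i))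
      ≤ B * Real.exp (-(m:ℝ) * ∑ i, q i * Real.log (q i / p i)) := by
        exact mul_le_mul_of_nonneg_right hBlow (Real.exp_pos _).le
    _ = ((univ.filter (fun z : Fin m → Fin k =>
          ∀ i, (univ.filter (fun j => z j = i)).card = N i)).card : ℝ)
        * (Real.exp (-(m:ℝ) * ∑ i, q i * Real.log (q i / p i)) * ∏ i, q i ^ N i) := by
        rw [hB]; ring
end

section
/- (Synthetic environments proposition) Let p and p* be probability distributions on {1,...,k} with supp(p*) ⊆ supp(p). For every ε > 0 and every α ∈ (0,1), there exist positive integers m and L such that, if L independent i.i.d. samples of size m are drawn from p, then with probability at least 1 − α at least one sample has empirical distribution p̂ satisfying ‖p̂ − p*‖₁ ≤ ε. -/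
open Finset
open scoped Classical

lemma exists_fun_counts {k m : ℕ} (c : Fin k → ℕ) (hc : ∑ i, c i = m) :
    ∃ w : Fin m → Fin k, ∀ i, (Finset.univ.filter fun j => w j = i).card = c i := by
  have hcard : Fintype.card (Σ i, Fin (c i)) = Fintype.card (Fin m) := by
    simp [Fintype.card_sigma, hc]
  let e := Fintype.equivOfCardEq hcard
  refine ⟨fun j => (e.symm j).1, fun i => ?_⟩
  rw [← Fintype.card_subtype]
  have e2 : {j : Fin m // (e.symm j).1 = i} ≃ {s : Σ i', Fin (c i') // s.1 = i} :=
    Equiv.subtypeEquiv e.symm (fun _ => Iff.rfl)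
  have e3 : {s : Σ i', Fin (c i') // s.1 = i} ≃ Fin (c i) :=
    { toFun := fun s => Fin.cast (congrArg c s.2) s.1.2
      invFun := fun x => ⟨⟨i, x⟩, rfl⟩
      left_inv := by rintro ⟨⟨i', x⟩, rfl⟩; rfl
      right_inv := fun x => rfl }
  rw [Fintype.card_congr (e2.trans e3), Fintype.card_fin]

lemma exists_counts {k : ℕ} (pstar : Fin k → ℝ) (hps : ∀ i, 0 ≤ pstar i)
    (hpssum : ∑ i, pstar i = 1) (m : ℕ) (hm : 0 < m) :
    ∃ c : Fin k → ℕ, ∑ i, c i = m ∧ (∀ i, c i ≠ 0 → pstar i ≠ 0) ∧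
      ∑ i, |(c i : ℝ) / m - pstar i| ≤ 2 * k / m := by
  have hex : ∃ i0, pstar i0 ≠ 0 := by
    by_contra h
    push_neg at h
    simp [h] at hpssum
  obtain ⟨i0, hi0⟩ := hex
  classical
  set c : Fin k → ℕ := fun i => if i = i0 then m - ∑ i' ∈ univ.erase i0, ⌊(m : ℝ) * pstar i'⌋₊
    else ⌊(m : ℝ) * pstar i⌋₊ with hcdef
  have hsum_le : ((∑ i' ∈ univ.erase i0, ⌊(m : ℝ) * pstar i'⌋₊ : ℕ) : ℝ) ≤ m := by
    push_cast
    calc ∑ i' ∈ univ.erase i0, ((⌊(m : ℝ) * pstar i'⌋₊ : ℝ)) ≤ ∑ i' ∈ univ.erase i0, (m : ℝ) * pstar i' := by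
          refine Finset.sum_le_sum fun i _ => Nat.floor_le (mul_nonneg (Nat.cast_nonneg m) (hps i))
      _ ≤ ∑ i', (m : ℝ) * pstar i' := by
          refine Finset.sum_le_sum_of_subset_of_nonneg (Finset.erase_subset _ _) ?_
          intro i _ _; exact mul_nonneg (Nat.cast_nonneg m) (hps i)
      _ = m := by rw [← Finset.mul_sum, hpssum, mul_one]
  have hsum_le' : ∑ i' ∈ univ.erase i0, ⌊(m : ℝ) * pstar i'⌋₊ ≤ m := by exact_mod_cast hsum_le
  have hcsum : ∑ i, c i = m := by
    rw [← Finset.add_sum_erase _ _ (Finset.mem_univ i0)]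
    have : ∀ i ∈ univ.erase i0, c i = ⌊(m : ℝ) * pstar i⌋₊ := by
      intro i hi
      simp only [hcdef]
      rw [if_neg (Finset.ne_of_mem_erase hi)]
    rw [Finset.sum_congr rfl this]
    simp only [hcdef, if_pos rfl]
    omega
  refine ⟨c, hcsum, ?_, ?_⟩
  · intro i hci
    by_cases hi : i = i0
    · rwa [hi]
    · simp only [hcdef, if_neg hi] at hci
      intro hzero
      rw [hzero, mul_zero, Nat.floor_zero] at hci
      exact hci rfl
  · -- error bound
    have hd : ∀ i, i ≠ i0 → 0 ≤ (m : ℝ) * pstar i - ⌊(m : ℝ) * pstar i⌋₊ ∧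
        (m : ℝ) * pstar i - ⌊(m : ℝ) * pstar i⌋₊ ≤ 1 := by
      intro i _
      constructor
      · have := Nat.floor_le (mul_nonneg (Nat.cast_nonneg m) (hps i))
        linarith
      · have := Nat.lt_floor_add_one ((m : ℝ) * pstar i)
        linarith
    have hci0 : (c i0 : ℝ) - (m : ℝ) * pstar i0 =
        ∑ i ∈ univ.erase i0, ((m : ℝ) * pstar i - ⌊(m : ℝ) * pstar i⌋₊) := by
      simp only [hcdef, if_pos rfl]
      rw [Nat.cast_sub hsum_le']
      have h1 : (m : ℝ) * pstar i0 = (m : ℝ) - ∑ i ∈ univ.erase i0, (m : ℝ) * pstar i := by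
        have h3 := Finset.add_sum_erase univ (fun i => (m : ℝ) * pstar i) (Finset.mem_univ i0)
        have h2 : ∑ i, (m : ℝ) * pstar i = m := by rw [← Finset.mul_sum, hpssum, mul_one]
        linarith [h3, h2]
      rw [h1]
      push_cast
      rw [Finset.sum_sub_distrib]
      ring
    have hb : ∑ i, |(c i : ℝ) / m - pstar i| ≤ (2 * (k - 1)) / m := by
      have hmpos : (0:ℝ) < m := by exact_mod_cast hm
      have key : ∀ i, |(c i : ℝ) / m - pstar i| = |(c i : ℝ) - (m:ℝ) * pstar i| / m := by
        intro i
        rw [← abs_of_pos hmpos, ← abs_div]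
        congr 1
        field_simp
        rw [abs_of_pos hmpos]; ring
      rw [Finset.sum_congr rfl (fun i _ => key i)]
      rw [← Finset.sum_div]
      have herase : ∀ i ∈ univ.erase i0, |(c i:ℝ) - (m:ℝ)*pstar i| = (m:ℝ)*pstar i - ⌊(m:ℝ)*pstar i⌋₊ := by
        intro i hi
        have hne := Finset.ne_of_mem_erase hi
        simp only [hcdef, if_neg hne]
        rw [abs_sub_comm, abs_of_nonneg (hd i hne).1]
      have h0 : |(c i0:ℝ) - (m:ℝ)*pstar i0| = ∑ i ∈ univ.erase i0, ((m:ℝ)*pstar i - ⌊(m:ℝ)*pstar i⌋₊) := by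
        rw [hci0]
        exact abs_of_nonneg (Finset.sum_nonneg fun i hi => (hd i (Finset.ne_of_mem_erase hi)).1)
      have hsum1 : ∑ i ∈ univ.erase i0, ((m:ℝ)*pstar i - ⌊(m:ℝ)*pstar i⌋₊) ≤ (k:ℝ) - 1 := by
        have hk : 1 ≤ k := i0.pos
        calc ∑ i ∈ univ.erase i0, ((m:ℝ)*pstar i - ⌊(m:ℝ)*pstar i⌋₊)
            ≤ ∑ _i ∈ univ.erase i0, (1:ℝ) :=
              Finset.sum_le_sum fun i hi => (hd i (Finset.ne_of_mem_erase hi)).2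
          _ = ((univ.erase i0).card : ℝ) := by simp
          _ = (k:ℝ) - 1 := by
              rw [Finset.card_erase_of_mem (Finset.mem_univ i0), Finset.card_univ,
                Fintype.card_fin, Nat.cast_sub hk, Nat.cast_one]
      gcongr
      · calc ∑ i, |(c i : ℝ) - (m:ℝ) * pstar i|
            = |(c i0:ℝ) - (m:ℝ)*pstar i0| + ∑ i ∈ univ.erase i0, |(c i : ℝ) - (m:ℝ)*pstar i| :=
              (Finset.add_sum_erase _ _ (Finset.mem_univ i0)).symm
          _ = 2 * ∑ i ∈ univ.erase i0, ((m:ℝ)*pstar i - ⌊(m:ℝ)*pstar i⌋₊) := by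
              rw [h0, Finset.sum_congr rfl herase]; ring
          _ ≤ 2 * ((k:ℝ) - 1) := by linarith
    have hk1 : (2 * ((k:ℝ) - 1)) / m ≤ 2 * k / m := by
      have hmpos : (0:ℝ) < m := by exact_mod_cast hm
      gcongr
      linarith
    linarith

/-- Synthetic environments proposition: for probability distributions `p, p*` on `Fin k`
with `supp p* ⊆ supp p`, and any `ε > 0`, `α ∈ (0,1)`, there exist `m, L ≥ 1` such that
if `L` independent i.i.d. samples of size `m` are drawn from `p`, then with probability
at least `1 - α` at least one sample has empirical distribution within ℓ₁-distance `ε`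
of `p*`. -/
theorem synthetic_environments (k : ℕ) (p pstar : Fin k → ℝ)
    (hp : ∀ i, 0 ≤ p i) (hpsum : ∑ i, p i = 1)
    (hps : ∀ i, 0 ≤ pstar i) (hpssum : ∑ i, pstar i = 1)
    (hsupp : ∀ i, pstar i ≠ 0 → p i ≠ 0)
    (ε α : ℝ) (hε : 0 < ε) (hα0 : 0 < α) (hα1 : α < 1) :
    ∃ m L : ℕ, 0 < m ∧ 0 < L ∧
      1 - α ≤
        ∑ z ∈ Finset.univ.filter
            (fun z : Fin L → Fin m → Fin k =>
              ∃ l : Fin L,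
                ∑ i, |((Finset.univ.filter (fun j => z l j = i)).card : ℝ) / m - pstar i|
                  ≤ ε),
          ∏ l, ∏ j, p (z l j) := by
  classical
  -- choose m
  set m : ℕ := max 1 ⌈2 * k / ε⌉₊ with hmdef
  have hm : 0 < m := lt_of_lt_of_le Nat.one_pos (le_max_left _ _)
  have hmpos : (0:ℝ) < m := by exact_mod_cast hm
  have h2k : 2 * (k:ℝ) / m ≤ ε := by
    have h1 : (2 * (k:ℝ) / ε) ≤ (⌈2 * (k:ℝ) / ε⌉₊ : ℝ) := Nat.le_ceil _
    have h2 : ((⌈2 * (k:ℝ) / ε⌉₊ : ℕ) : ℝ) ≤ (m : ℝ) := by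
      have := le_max_right 1 ⌈2 * (k:ℝ) / ε⌉₊
      rw [hmdef]
      exact_mod_cast this
    have h3 : 2 * (k:ℝ) / ε ≤ m := le_trans h1 h2
    rw [div_le_iff₀ hε] at h3
    rw [div_le_iff₀ hmpos]
    linarith
  obtain ⟨c, hcsum, hcnz, hcerr⟩ := exists_counts pstar hps hpssum m hm
  obtain ⟨w0, hw0⟩ := exists_fun_counts c hcsum
  set P : (Fin m → Fin k) → Prop := fun w =>
    ∑ i, |((Finset.univ.filter (fun j => w j = i)).card : ℝ) / m - pstar i| ≤ ε with hPdef
  have hPw0 : P w0 := by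
    simp only [hPdef, hw0]
    linarith
  set g : (Fin m → Fin k) → ℝ := fun w => ∏ j, p (w j) with hgdef
  have hgnn : ∀ w, 0 ≤ g w := fun w => Finset.prod_nonneg fun j _ => hp (w j)
  set t : ℝ := g w0 with htdef
  have ht : 0 < t := by
    refine Finset.prod_pos fun j _ => ?_
    refine lt_of_le_of_ne (hp (w0 j)) (Ne.symm (hsupp _ ?_))
    intro hzero
    have hjmem : j ∈ Finset.univ.filter (fun j' => w0 j' = w0 j) := by simp
    have hcard : 0 < (Finset.univ.filter (fun j' => w0 j' = w0 j)).card :=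
      Finset.card_pos.mpr ⟨j, hjmem⟩
    rw [hw0 (w0 j)] at hcard
    exact hcnz _ (by omega) hzero
  set q : ℝ := ∑ w ∈ Finset.univ.filter P, g w with hqdef
  set qbad : ℝ := ∑ w ∈ Finset.univ.filter (fun w => ¬ P w), g w with hqbaddef
  have htotal : ∑ w : Fin m → Fin k, g w = 1 := by
    have := Finset.prod_univ_sum (fun _ : Fin m => (Finset.univ : Finset (Fin k)))
      (fun _ i => p i)
    rw [Fintype.piFinset_univ] at this
    rw [← this]
    simp [hpsum]
  have hsplit : q + qbad = 1 := by
    rw [hqdef, hqbaddef, Finset.sum_filter_add_sum_filter_not, htotal]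
  have htq : t ≤ q :=
    Finset.single_le_sum (fun w _ => hgnn w) (Finset.mem_filter.mpr ⟨Finset.mem_univ _, hPw0⟩)
  have hqbadnn : 0 ≤ qbad := Finset.sum_nonneg fun w _ => hgnn w
  have hqnn : 0 ≤ q := Finset.sum_nonneg fun w _ => hgnn w
  have hqbad1 : qbad ≤ 1 - t := by linarith
  have ht1 : t ≤ 1 := by linarith
  obtain ⟨L0, hL0⟩ := exists_pow_lt_of_lt_one hα0 (show (1:ℝ) - t < 1 by linarith)
  refine ⟨m, max 1 L0, hm, lt_of_lt_of_le Nat.one_pos (le_max_left _ _), ?_⟩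
  set L : ℕ := max 1 L0 with hLdef
  have hLL : (1 - t) ^ L ≤ (1 - t) ^ L0 :=
    pow_le_pow_of_le_one (by linarith) (by linarith) (le_max_right _ _)
  have hbadpow : ∑ z ∈ Finset.univ.filter
      (fun z : Fin L → Fin m → Fin k => ¬ ∃ l, P (z l)), ∏ l, ∏ j, p (z l j) = qbad ^ L := by
    have hfe : Finset.univ.filter (fun z : Fin L → Fin m → Fin k => ¬ ∃ l, P (z l))
        = Fintype.piFinset (fun _ : Fin L => Finset.univ.filter (fun w => ¬ P w)) := by
      ext z
      simp [Fintype.mem_piFinset, not_exists]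
    rw [hfe]
    have := Finset.prod_univ_sum (fun _ : Fin L => Finset.univ.filter (fun w => ¬ P w))
      (fun _ w => g w)
    rw [← this, hqbaddef]
    simp [hgdef]
  have htotL : ∑ z : Fin L → Fin m → Fin k, ∏ l, ∏ j, p (z l j) = 1 := by
    have := Finset.prod_univ_sum (fun _ : Fin L => (Finset.univ : Finset (Fin m → Fin k)))
      (fun _ w => g w)
    rw [Fintype.piFinset_univ] at this
    rw [← this]
    simp [hgdef, htotal]
    rw [show (∑ w : Fin m → Fin k, ∏ j, p (w j)) = 1 from htotal, one_pow]
  have hgoal : ∑ z ∈ Finset.univ.filter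
      (fun z : Fin L → Fin m → Fin k => ∃ l, P (z l)), ∏ l, ∏ j, p (z l j)
      = 1 - qbad ^ L := by
    have := Finset.sum_filter_add_sum_filter_not (Finset.univ : Finset (Fin L → Fin m → Fin k))
      (fun z => ∃ l, P (z l)) (fun z => ∏ l, ∏ j, p (z l j))
    rw [htotL, hbadpow] at this
    linarith
  have hfinal : qbad ^ L ≤ α := by
    calc qbad ^ L ≤ (1 - t) ^ L := pow_le_pow_left₀ hqbadnn hqbad1 L
      _ ≤ (1 - t) ^ L0 := hLL
      _ ≤ α := le_of_lt hL0
  have hPeq : (fun z : Fin L → Fin m → Fin k => ∃ l, P (z l)) =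
      (fun z : Fin L → Fin m → Fin k => ∃ l : Fin L,
        ∑ i, |((Finset.univ.filter (fun j => z l j = i)).card : ℝ) / m - pstar i| ≤ ε) := rfl
  refine le_trans ?_ (le_of_eq hgoal.symm)
  linarith
end
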